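/- (Barbalat's lemma) Let f : [0,∞) → ℝ be uniformly continuous, and suppose the limit lim_{t→∞} ∫₀ᵗ f(s) ds exists and is finite. Then lim_{t→∞} f(t) = 0. -/
import Mathlib


open Filter

theorem stmt14 (f : ℝ → ℝ)
    (hf : UniformContinuousOn f (Set.Ici 0))
    (hint : ∀ t, IntervalIntegrable f MeasureTheory.volume 0 t)
    (L : ℝ)
    (hlim : Tendsto (fun t => ∫ s in (0:ℝ)..t, f s) atTop (nhds L)) :
    Tendsto f atTop (nhds 0) := by
  by_contra hcon
  rw [Metric.tendsto_atTop] at hcon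
  push_neg at hcon
  obtain ⟨ε, hε, hseq⟩ := hcon
  obtain ⟨δ, hδ, hδ'⟩ := (Metric.uniformContinuousOn_iff).1 hf (ε/2) (by positivity)
  set c := δ/2 with hc
  have hc0 : 0 < c := by positivity
  have hInt : ∀ t, 0 ≤ t → IntervalIntegrable f MeasureTheory.volume t (t+c) := by
    intro t ht
    apply (hint (t+c)).mono_set
    rw [Set.uIcc_of_le (by linarith), Set.uIcc_of_le (by linarith)]
    exact Set.Icc_subset_Icc ht le_rfl
  have hg : Tendsto (fun t => ∫ s in t..(t+c), f s) atTop (nhds 0) := by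
    have h1 : Tendsto (fun t => (∫ s in (0:ℝ)..(t+c), f s) - ∫ s in (0:ℝ)..t, f s)
        atTop (nhds (L - L)) :=
      (hlim.comp (tendsto_atTop_add_const_right atTop c tendsto_id)).sub hlim
    rw [sub_self] at h1
    apply h1.congr'
    filter_upwards [eventually_ge_atTop (0:ℝ)] with t ht
    rw [← intervalIntegral.integral_add_adjacent_intervals (hint t) (hInt t ht)]
    ring
  rw [Metric.tendsto_atTop] at hg
  obtain ⟨N, hN⟩ := hg (ε/2 * c) (by positivity)
  obtain ⟨t, ht, htf⟩ := hseq (max N 0)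
  have ht0 : (0:ℝ) ≤ t := le_trans (le_max_right _ _) ht
  have htN : N ≤ t := le_trans (le_max_left _ _) ht
  rw [Real.dist_eq, sub_zero] at htf
  have key : ∀ s ∈ Set.Icc t (t+c), |f s - f t| < ε/2 := by
    intro s hs
    have hs0 : (0:ℝ) ≤ s := le_trans ht0 hs.1
    have h := hδ' s hs0 t ht0 ?_
    · rwa [Real.dist_eq] at h
    · rw [Real.dist_eq, abs_of_nonneg (by linarith [hs.1])]
      have := hs.2
      simp only [hc] at *
      linarith
  have hNt := hN t htN
  rw [Real.dist_eq, sub_zero] at hNt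
  rcases le_or_gt ε (f t) with hpos | hrest
  · -- f t ≥ ε : integral ≥ ε/2 * c
    have hlow : (ε/2) * c ≤ ∫ s in t..(t+c), f s := by
      have hmono := intervalIntegral.integral_mono_on (by linarith : t ≤ t + c)
        (intervalIntegrable_const (c := ε/2)) (hInt t ht0)
        (fun s hs => by
          have := key s hs
          have := abs_lt.mp this
          linarith [this.1])
      rw [intervalIntegral.integral_const, smul_eq_mul] at hmono
      calc (ε/2) * c = (t + c - t) * (ε/2) := by ring
        _ ≤ _ := hmono
    have := le_abs_self (∫ s in t..(t+c), f s)
    linarith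
  · have hneg : f t ≤ -ε := by
      rcases le_or_gt 0 (f t) with h0 | h0
      · rw [abs_of_nonneg h0] at htf; linarith
      · rw [abs_of_neg h0] at htf; linarith
    have hhigh : (∫ s in t..(t+c), f s) ≤ -((ε/2) * c) := by
      have hmono := intervalIntegral.integral_mono_on (by linarith : t ≤ t + c)
        (hInt t ht0) (intervalIntegrable_const (c := -(ε/2)))
        (fun s hs => by
          have := abs_lt.mp (key s hs)
          linarith [this.2])
      rw [intervalIntegral.integral_const, smul_eq_mul] at hmono
      calc (∫ s in t..(t+c), f s) ≤ (t + c - t) * (-(ε/2)) := hmono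
        _ = -((ε/2) * c) := by ring
    have := neg_abs_le (∫ s in t..(t+c), f s)
    linarith
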